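/- For every odd positive integer r, 9 divides 2^(3r+2) − 5, and the (3r+2)-th iterate of the accelerated Collatz map T applied to N = (2^(3r+2) − 5)/9 equals 1. -/
import Mathlib


def T (n : ℕ) : ℕ := if n % 2 = 0 then n / 2 else (3 * n + 1) / 2

lemma T_pow (j : ℕ) : T^[j] (2 ^ j) = 1 := by
  induction j with
  | zero => simp
  | succ n ih =>
    rw [Function.iterate_succ_apply]
    have h : T (2 ^ (n + 1)) = 2 ^ n := by
      unfold T
      rw [pow_succ]
      simp [Nat.mul_mod_left]
    rw [h, ih]

theorem stmt9 (r : ℕ) (hr : 0 < r) (hrodd : Odd r) :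
    9 ∣ 2 ^ (3 * r + 2) - 5 ∧ T^[3 * r + 2] ((2 ^ (3 * r + 2) - 5) / 9) = 1 := by
  obtain ⟨m, rfl⟩ := hrodd
  have hk : 3 * (2 * m + 1) + 2 = 6 * m + 5 := by ring
  rw [hk]
  -- 9 ∣ 64^m - 1
  have h63 : (64 : ℕ) - 1 ∣ 64 ^ m - 1 ^ m := Nat.sub_dvd_pow_sub_pow 64 1 m
  have h9 : 9 ∣ 64 ^ m - 1 := by
    simpa using dvd_trans (by norm_num : (9:ℕ) ∣ 63) h63
  obtain ⟨t, ht⟩ := h9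
  have h1 : (1:ℕ) ≤ 64 ^ m := Nat.one_le_pow _ _ (by norm_num)
  have h64 : 64 ^ m = 9 * t + 1 := by omega
  have hpow : 2 ^ (6 * m + 5) = 32 * (9 * t + 1) := by
    rw [show 6 * m + 5 = 6 * m + 5 from rfl, pow_add, pow_mul, ← h64]
    norm_num [mul_comm]
  have hsub : 2 ^ (6 * m + 5) - 5 = 9 * (32 * t + 3) := by omega
  constructor
  · exact ⟨32 * t + 3, hsub⟩
  · rw [hsub, Nat.mul_div_cancel_left _ (by norm_num : (0:ℕ) < 9)]
    rw [show 6 * m + 5 = (6 * m + 3) + 1 + 1 from rfl,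
      Function.iterate_succ_apply, Function.iterate_succ_apply]
    have e1 : T (32 * t + 3) = 48 * t + 5 := by unfold T; split <;> omega
    have e2 : T (48 * t + 5) = 72 * t + 8 := by unfold T; split <;> omega
    rw [e1, e2]
    have hp : (72 * t + 8 : ℕ) = 2 ^ (6 * m + 3) := by
      rw [pow_add, pow_mul, show ((2:ℕ)^6)^m = 64^m by norm_num, h64]; ring
    rw [hp, T_pow]
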